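/- arXiv:1810.00481 — 3 statements merged into one kernel-verified Lean document; each statement's English description precedes it below -/
import Mathlib

section
/- Let f : 𝔽₂ⁿ → {−1,1} be a Boolean function with Fourier dimension Fdim(f) = r ≥ 1. Then there exist an invertible matrix B ∈ 𝔽₂^{n×n} and t ∈ [r] such that: (1) f̂_B(e₁) ≠ 0; (2) for every j ∈ {2,…,t}, Fdim((f_B)^{(j)}) ≤ r − t; (3) the Fourier support of (f_B)^{(1)} is contained in span{e_{t+1},…,e_r}; and (4) the Fourier coefficient of (f_B)^{(1)} at e_ℓ is nonzero for every ℓ ∈ {t+1,…,r}. -/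
/-!
Pick a nonzero `α ∈ supp f̂` for which `m = dim span ({α} ∪ Z_α)` is largest, where `Z_α` is the set
of `u` with `f̂(u) ± f̂(u + α) ≠ 0`: whenever `B e_j = α`, the spectrum of `(f_B)^{(j)}` is carried
by `B` into `Z_α`. Put `t = r + 1 - m` and let the columns of `B` be `α`, then `t - 1` vectors of
`supp f̂` completing `span ({α} ∪ Z_α)` to `Fspan f`, then `m - 1` vectors of `Z_α` completing `α`
to a basis of `span ({α} ∪ Z_α)`, then anything. This gives (1), (3) and (4) by construction.
For (2), the spectrum of `(f_B)^{(j)}` lies in the hyperplane `S_j = 0`, so its image under `B`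
spans a proper subspace of `span ({b_j} ∪ Z_{b_j})`, of dimension at most `m` by the choice of `α`.
-/

/-- The Fourier coefficient of `f : 𝔽₂ⁿ → ℝ` at `S ∈ 𝔽₂ⁿ`. -/
noncomputable def fCoeff {n : ℕ} (f : (Fin n → ZMod 2) → ℝ) (S : Fin n → ZMod 2) : ℝ :=
  (1 / 2 ^ n) * ∑ x : Fin n → ZMod 2, f x * (-1 : ℝ) ^ (∑ i, (S i).val * (x i).val)

/-- The Fourier support of `f`. -/
noncomputable def fSupp {n : ℕ} (f : (Fin n → ZMod 2) → ℝ) : Set (Fin n → ZMod 2) :=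
  {S | fCoeff f S ≠ 0}

/-- The `j`-th standard basis vector of `𝔽₂ⁿ`. -/
def stdBasis {n : ℕ} (j : Fin n) : Fin n → ZMod 2 :=
  fun i => if i = j then 1 else 0

/-- For invertible `B ∈ 𝔽₂^{n×n}`, the function `f_B(x) = f((B⁻¹)ᵀ x)`. -/
noncomputable def changeBasis {n : ℕ} (f : (Fin n → ZMod 2) → ℝ)
    (B : Matrix (Fin n) (Fin n) (ZMod 2)) : (Fin n → ZMod 2) → ℝ :=
  fun x => f (B⁻¹.transpose.mulVec x)

/-- The restriction `g^{(i)}` of `g`, fixing `x_i = b` where `b ∈ {0,1}` is chosen so that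
`(−1)^b·ĝ(e_i) = |ĝ(e_i)|` (and `b = 0` if `ĝ(e_i) = 0`). -/
noncomputable def restrictAt {n : ℕ} (g : (Fin n → ZMod 2) → ℝ) (i : Fin n) :
    (Fin n → ZMod 2) → ℝ :=
  fun x => g (Function.update x i (if fCoeff g (stdBasis i) < 0 then 1 else 0))

open Module Submodule
open scoped Matrix

noncomputable def zmodSign (a : ZMod 2) : ℝ := (-1) ^ a.val

lemma zmodSign_zero : zmodSign 0 = 1 := by simp [zmodSign]

lemma zmodSign_one : zmodSign 1 = -1 := by simp [zmodSign, ZMod.val_one]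

lemma zmodSign_add (a b : ZMod 2) : zmodSign (a + b) = zmodSign a * zmodSign b := by
  rw [zmodSign, ZMod.val_add, ← neg_one_pow_eq_pow_mod_two, pow_add]; rfl

lemma zmodSign_mul_self (a : ZMod 2) : zmodSign a * zmodSign a = 1 := by
  rw [← zmodSign_add, ← two_mul, show (2 : ZMod 2) = 0 from rfl, zero_mul, zmodSign_zero]

lemma zmod2_eq_add_one_of_ne {a b : ZMod 2} (h : a ≠ b) : a = b + 1 := by
  revert a b; decide

lemma zmodSign_natCast (m : ℕ) : zmodSign m = (-1) ^ m := by
  rw [zmodSign, ZMod.val_natCast, ← neg_one_pow_eq_pow_mod_two]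

section Fourier

variable {n : ℕ}

lemma fCoeff_eq_sum (f : (Fin n → ZMod 2) → ℝ) (S : Fin n → ZMod 2) :
    fCoeff f S = (2 ^ n)⁻¹ * ∑ x, f x * zmodSign (S ⬝ᵥ x) := by
  have h : ∀ x : Fin n → ZMod 2, S ⬝ᵥ x = ((∑ i, (S i).val * (x i).val : ℕ) : ZMod 2) := by
    intro x; push_cast; simp [dotProduct]
  simp only [fCoeff, one_div, h, zmodSign_natCast]

lemma fCoeff_add (f g : (Fin n → ZMod 2) → ℝ) (S : Fin n → ZMod 2) :
    fCoeff (fun x => f x + g x) S = fCoeff f S + fCoeff g S := by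
  simp only [fCoeff, add_mul, Finset.sum_add_distrib, mul_add]

lemma fCoeff_sub (f g : (Fin n → ZMod 2) → ℝ) (S : Fin n → ZMod 2) :
    fCoeff (fun x => f x - g x) S = fCoeff f S - fCoeff g S := by
  simp only [fCoeff, sub_mul, Finset.sum_sub_distrib, mul_sub]

lemma fCoeff_const_mul (c : ℝ) (f : (Fin n → ZMod 2) → ℝ) (S : Fin n → ZMod 2) :
    fCoeff (fun x => c * f x) S = c * fCoeff f S := by
  simp only [fCoeff, mul_assoc, ← Finset.mul_sum]; ring

lemma fCoeff_comp_add_right (f : (Fin n → ZMod 2) → ℝ) (a S : Fin n → ZMod 2) :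
    fCoeff (fun x => f (x + a)) S = zmodSign (S ⬝ᵥ a) * fCoeff f S := by
  rw [fCoeff_eq_sum, fCoeff_eq_sum,
    ← Equiv.sum_comp (Equiv.addRight a) (fun y => f y * zmodSign (S ⬝ᵥ y)),
    Finset.mul_sum, Finset.mul_sum, Finset.mul_sum]
  refine Finset.sum_congr rfl fun x _ => ?_
  simp only [Equiv.coe_addRight, dotProduct_add, zmodSign_add]
  linear_combination -(2 ^ n : ℝ)⁻¹ * f (x + a) * zmodSign (S ⬝ᵥ x) * zmodSign_mul_self (S ⬝ᵥ a)

lemma fCoeff_zmodSign_mul (f : (Fin n → ZMod 2) → ℝ) (a S : Fin n → ZMod 2) :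
    fCoeff (fun x => zmodSign (a ⬝ᵥ x) * f x) S = fCoeff f (S + a) := by
  simp only [fCoeff_eq_sum, add_dotProduct, zmodSign_add]
  congr 1
  exact Finset.sum_congr rfl fun x _ => by ring

lemma fCoeff_changeBasis (f : (Fin n → ZMod 2) → ℝ) {B : Matrix (Fin n) (Fin n) (ZMod 2)}
    (hB : IsUnit B.det) (S : Fin n → ZMod 2) :
    fCoeff (changeBasis f B) S = fCoeff f (B *ᵥ S) := by
  have hBinv : IsUnit B⁻¹ᵀ := by
    rw [Matrix.isUnit_iff_isUnit_det, Matrix.det_transpose]; exact B.isUnit_nonsing_inv_det hB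
  rw [fCoeff_eq_sum, fCoeff_eq_sum]
  congr 1
  refine Fintype.sum_bijective _ ⟨Matrix.mulVec_injective_of_isUnit hBinv,
    Matrix.mulVec_surjective_iff_isUnit.mpr hBinv⟩ _ _ fun x => ?_
  rw [changeBasis, Matrix.dotProduct_mulVec, Matrix.vecMul_transpose, Matrix.mulVec_mulVec,
    Matrix.nonsing_inv_mul _ hB, Matrix.one_mulVec]

end Fourier

section Restriction

variable {n : ℕ}

lemma stdBasis_eq_single (j : Fin n) : stdBasis j = Pi.single j 1 := by
  funext i; simp [stdBasis, Pi.single_apply]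

lemma stdBasis_self (j : Fin n) : stdBasis j j = 1 := if_pos rfl

lemma stdBasis_dotProduct (j : Fin n) (x : Fin n → ZMod 2) : stdBasis j ⬝ᵥ x = x j := by
  rw [stdBasis_eq_single, single_dotProduct, one_mul]

lemma dotProduct_stdBasis (S : Fin n → ZMod 2) (j : Fin n) : S ⬝ᵥ stdBasis j = S j := by
  rw [stdBasis_eq_single, dotProduct_single, mul_one]

lemma update_eq_add_stdBasis {x : Fin n → ZMod 2} {j : Fin n} {b : ZMod 2} (h : x j ≠ b) :
    Function.update x j b = x + stdBasis j := by
  have hb : b = x j + 1 := zmod2_eq_add_one_of_ne h.symm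
  funext i
  rcases eq_or_ne i j with rfl | hij
  · simp [stdBasis_self, hb]
  · simp [stdBasis, hij]

-- `g (update x j b)` is the average of `g` over `x + 𝔽₂ e_j`, corrected by the character
-- `x ↦ (-1)^(x_j + b)`.
lemma comp_update_eq (g : (Fin n → ZMod 2) → ℝ) (x : Fin n → ZMod 2) (j : Fin n) (b : ZMod 2) :
    g (Function.update x j b) =
      2⁻¹ * (g x + g (x + stdBasis j)) +
        2⁻¹ * zmodSign b * (zmodSign (stdBasis j ⬝ᵥ x) * g x) -
        2⁻¹ * zmodSign b * (zmodSign (stdBasis j ⬝ᵥ x) * g (x + stdBasis j)) := by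
  rw [stdBasis_dotProduct]
  by_cases h : x j = b
  · rw [← h, Function.update_eq_self]
    linear_combination (2⁻¹ * (g (x + stdBasis j) - g x)) * zmodSign_mul_self (x j)
  · rw [update_eq_add_stdBasis h, zmod2_eq_add_one_of_ne h, zmodSign_add, zmodSign_one]
    linear_combination (2⁻¹ * (g x - g (x + stdBasis j))) * zmodSign_mul_self b

lemma fCoeff_comp_update (g : (Fin n → ZMod 2) → ℝ) (j : Fin n) (b : ZMod 2)
    (S : Fin n → ZMod 2) :
    fCoeff (fun x => g (Function.update x j b)) S =
      if S j = 0 then fCoeff g S + zmodSign b * fCoeff g (S + stdBasis j) else 0 := by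
  simp only [comp_update_eq g _ j b]
  rw [fCoeff_sub, fCoeff_add, fCoeff_const_mul, fCoeff_add, fCoeff_comp_add_right,
    fCoeff_const_mul, fCoeff_zmodSign_mul, fCoeff_const_mul,
    fCoeff_zmodSign_mul, fCoeff_comp_add_right]
  simp only [add_dotProduct, dotProduct_stdBasis, stdBasis_self]
  split_ifs with h
  · rw [h, zero_add, zmodSign_zero, zmodSign_one]; ring
  · rw [zmod2_eq_add_one_of_ne h, zero_add, show (1 + 1 : ZMod 2) = 0 from rfl, zmodSign_zero,
      zmodSign_one]; ring

end Restriction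

section RestrictedSpectrum

variable {n : ℕ}

/-- If `B *ᵥ e_j = γ` and `S j = 0`, then `restrictCoeff f γ (B *ᵥ S)` is the coefficient of
`(f_B)^{(j)}` at `S` (see `fCoeff_restrictAt_changeBasis`). -/
noncomputable def restrictCoeff (f : (Fin n → ZMod 2) → ℝ) (γ u : Fin n → ZMod 2) : ℝ :=
  fCoeff f u + (if fCoeff f γ < 0 then -1 else 1) * fCoeff f (u + γ)

noncomputable def restrictSupp (f : (Fin n → ZMod 2) → ℝ) (γ : Fin n → ZMod 2) :
    Set (Fin n → ZMod 2) :=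
  {u | restrictCoeff f γ u ≠ 0}

noncomputable def restrictRank (f : (Fin n → ZMod 2) → ℝ) (γ : Fin n → ZMod 2) : ℕ :=
  finrank (ZMod 2) (span (ZMod 2) (insert γ (restrictSupp f γ)))

lemma fCoeff_restrictAt (g : (Fin n → ZMod 2) → ℝ) (j : Fin n) (S : Fin n → ZMod 2) :
    fCoeff (restrictAt g j) S = if S j = 0 then restrictCoeff g (stdBasis j) S else 0 := by
  have hsign : zmodSign (if fCoeff g (stdBasis j) < 0 then 1 else 0) =
      if fCoeff g (stdBasis j) < 0 then -1 else 1 := by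
    split_ifs <;> simp [zmodSign_zero, zmodSign_one]
  unfold restrictAt
  rw [fCoeff_comp_update, hsign, restrictCoeff]

lemma fCoeff_restrictAt_changeBasis (f : (Fin n → ZMod 2) → ℝ)
    {B : Matrix (Fin n) (Fin n) (ZMod 2)} (hB : IsUnit B.det) (j : Fin n) (S : Fin n → ZMod 2) :
    fCoeff (restrictAt (changeBasis f B) j) S =
      if S j = 0 then restrictCoeff f (B *ᵥ stdBasis j) (B *ᵥ S) else 0 := by
  simp only [fCoeff_restrictAt, restrictCoeff, fCoeff_changeBasis f hB, Matrix.mulVec_add]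

lemma mem_restrictSupp_of_mem_fSupp_restrictAt (f : (Fin n → ZMod 2) → ℝ)
    {B : Matrix (Fin n) (Fin n) (ZMod 2)} (hB : IsUnit B.det) {j : Fin n} {S : Fin n → ZMod 2}
    (hS : S ∈ fSupp (restrictAt (changeBasis f B) j)) :
    S j = 0 ∧ B *ᵥ S ∈ restrictSupp f (B *ᵥ stdBasis j) := by
  simp only [fSupp, Set.mem_ofPred_eq, fCoeff_restrictAt_changeBasis f hB] at hS
  split_ifs at hS with h
  exacts [⟨h, hS⟩, absurd rfl hS]

lemma restrictSupp_subset_span (f : (Fin n → ZMod 2) → ℝ) {γ : Fin n → ZMod 2}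
    (hγ : γ ∈ span (ZMod 2) (fSupp f)) : restrictSupp f γ ⊆ span (ZMod 2) (fSupp f) := by
  intro u hu
  by_cases hu' : u ∈ fSupp f
  · exact subset_span hu'
  · have huγ : u + γ ∈ fSupp f := fun h => hu (by
      simp only [fSupp, Set.mem_ofPred_eq, not_not] at hu' h
      rw [restrictCoeff, hu', h, mul_zero, add_zero])
    simpa using sub_mem (subset_span huγ) hγ

lemma finrank_span_fSupp_restrictAt_lt (f : (Fin n → ZMod 2) → ℝ)
    {B : Matrix (Fin n) (Fin n) (ZMod 2)} (hB : IsUnit B.det) (j : Fin n) :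
    finrank (ZMod 2) (span (ZMod 2) (fSupp (restrictAt (changeBasis f B) j))) <
      restrictRank f (B *ᵥ stdBasis j) := by
  set P := span (ZMod 2) (fSupp (restrictAt (changeBasis f B) j))
  have hinj : Function.Injective B.mulVecLin :=
    Matrix.mulVec_injective_of_isUnit ((Matrix.isUnit_iff_isUnit_det B).mpr hB)
  have hPj : ∀ S ∈ P, S j = 0 := fun S hS =>
    span_induction (fun S hS => (mem_restrictSupp_of_mem_fSupp_restrictAt f hB hS).1)
      rfl (fun _ _ _ _ h h' => by rw [Pi.add_apply, h, h', add_zero])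
      (fun a _ _ h => by rw [Pi.smul_apply, h, smul_zero]) hS
  have hmap : P.map B.mulVecLin ≤ span (ZMod 2)
      (insert (B *ᵥ stdBasis j) (restrictSupp f (B *ᵥ stdBasis j))) := by
    rw [map_span, span_le]
    rintro _ ⟨S, hS, rfl⟩
    exact subset_span (Set.mem_insert_of_mem _
      (mem_restrictSupp_of_mem_fSupp_restrictAt f hB hS).2)
  have hmiss : B *ᵥ stdBasis j ∉ P.map B.mulVecLin := by
    rintro ⟨S, hS, hSj⟩
    have := hPj S hS
    rw [hinj hSj, stdBasis_self] at this
    exact one_ne_zero this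
  calc finrank (ZMod 2) P = finrank (ZMod 2) (P.map B.mulVecLin) :=
        (equivMapOfInjective _ hinj P).finrank_eq
    _ < restrictRank f (B *ᵥ stdBasis j) :=
        finrank_lt_finrank_of_lt (lt_of_le_of_ne hmap fun h =>
          hmiss (h ▸ subset_span (Set.mem_insert _ _)))

end RestrictedSpectrum

section AdaptedBasis

variable {K V : Type*} [Field K] [AddCommGroup V] [Module K V] [FiniteDimensional K V]

lemma Fin.range_append {α : Type*} {k l : ℕ} (u : Fin k → α) (w : Fin l → α) :
    Set.range (Fin.append u w) = Set.range u ∪ Set.range w := by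
  ext x
  constructor
  · rintro ⟨i, rfl⟩
    induction i using Fin.addCases <;> simp
  · rintro (⟨i, rfl⟩ | ⟨i, rfl⟩)
    exacts [⟨Fin.castAdd l i, Fin.append_left u w i⟩, ⟨Fin.natAdd k i, Fin.append_right u w i⟩]

lemma Submodule.exists_fin_sup_span_eq (s : Set V) (p : Submodule K V) :
    ∃ (k : ℕ) (u : Fin k → V), (∀ i, u i ∈ s) ∧ p ⊔ span K (Set.range u) = p ⊔ span K s ∧
      finrank K ↥(p ⊔ span K s) = finrank K p + k := by
  induction hd : finrank K V - finrank K p using Nat.strong_induction_on generalizing p with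
  | _ d ih =>
  by_cases hs : s ⊆ p
  · have hp : p ⊔ span K s = p := sup_eq_left.mpr (span_le.mpr hs)
    exact ⟨0, Fin.elim0, fun i => i.elim0, by simp [hp], by rw [hp, add_zero]⟩
  obtain ⟨x, hxs, hxp⟩ := Set.not_subset.mp hs
  have hrank : finrank K ↥(p ⊔ K ∙ x) = finrank K p + 1 := finrank_sup_span_singleton hxp
  have hle : finrank K ↥(p ⊔ K ∙ x) ≤ finrank K V := Submodule.finrank_le _
  obtain ⟨k, u, hus, hspan, hk⟩ := ih _ (by omega) (p ⊔ K ∙ x) rfl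
  have hx : p ⊔ K ∙ x ⊔ span K s = p ⊔ span K s := by
    rw [sup_assoc, sup_eq_right.mpr (span_mono (R := K) (Set.singleton_subset_iff.mpr hxs))]
  refine ⟨k + 1, Fin.cons x u, Fin.cases hxs hus, ?_, ?_⟩
  · rw [Fin.range_cons, span_insert, ← sup_assoc, hspan, hx]
  · rw [← hx, hk, hrank]; ring

theorem exists_basis_adapted {n r : ℕ} (hn : finrank K V = n) {α : V} (hα : α ≠ 0)
    {T Z : Set V} (hαT : α ∈ T) (hZT : Z ⊆ span K T) (hr : finrank K (span K T) = r) :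
    ∃ (t : ℕ) (b : Basis (Fin n) K V), 1 ≤ t ∧ t ≤ r ∧
      finrank K (span K (insert α Z)) + t = r + 1 ∧
      (∀ i : Fin n, i.val = 0 → b i = α) ∧
      (∀ i : Fin n, 1 ≤ i.val → i.val < t → b i ∈ T) ∧
      (∀ i : Fin n, t ≤ i.val → i.val < r → b i ∈ Z) ∧
      Z ⊆ span K (b '' {i | i.val = 0 ∨ t ≤ i.val ∧ i.val < r}) := by
  obtain ⟨k₁, u₁, hu₁, hspan₁, hk₁⟩ := exists_fin_sup_span_eq Z (K ∙ α)
  obtain ⟨k₂, u₂, hu₂, hspan₂, hk₂⟩ := exists_fin_sup_span_eq T (span K (insert α Z))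
  obtain ⟨k₃, u₃, -, hspan₃, hk₃⟩ := exists_fin_sup_span_eq Set.univ (span K T)
  have hW : span K (insert α Z) ⊔ span K T = span K T :=
    sup_eq_right.mpr (span_le.mpr (Set.insert_subset (subset_span hαT) hZT))
  rw [← span_insert α Z] at hspan₁ hk₁
  rw [hW] at hspan₂ hk₂
  rw [span_univ, sup_top_eq] at hspan₃ hk₃
  rw [finrank_top] at hk₃
  rw [finrank_span_singleton hα] at hk₁
  obtain rfl : n = k₂ + k₁ + k₃ + 1 := by omega
  obtain rfl : r = k₂ + k₁ + 1 := by omega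
  set v : Fin (k₂ + k₁ + k₃ + 1) → V := Fin.cons α (Fin.append (Fin.append u₂ u₁) u₃)
  have hspan : ⊤ ≤ span K (Set.range v) := by
    rw [Fin.range_cons, Fin.range_append, Fin.range_append, span_insert, span_union, span_union,
      ← hspan₃, ← hspan₂, ← hspan₁]
    exact le_of_eq (by ac_rfl)
  have hcard : Fintype.card (Fin (k₂ + k₁ + k₃ + 1)) = finrank K V := by
    rw [Fintype.card_fin, hn]
  set b := basisOfTopLeSpanOfCardEqFinrank v hspan hcard
  have hb : ⇑b = v := coe_basisOfTopLeSpanOfCardEqFinrank v hspan hcard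
  refine ⟨k₂ + 1, b, by omega, by omega, by omega, ?_, ?_, ?_, ?_⟩ <;> rw [hb]
  · intro i hi
    obtain rfl : i = 0 := Fin.ext hi
    rfl
  · intro i
    induction i using Fin.cases with
    | zero => simp
    | succ i =>
      induction i using Fin.addCases with
      | left i => induction i using Fin.addCases <;> simp [v, hu₂]
      | right i => simp only [Fin.val_succ, Fin.val_natAdd]; omega
  · intro i
    induction i using Fin.cases with
    | zero => simp
    | succ i =>
      induction i using Fin.addCases with
      | left i => induction i using Fin.addCases <;> simp [v, hu₁]
      | right i => simp
  · have hsub : insert α (Set.range u₁) ⊆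
        v '' {i | i.val = 0 ∨ k₂ + 1 ≤ i.val ∧ i.val < k₂ + k₁ + 1} := by
      rintro _ (rfl | ⟨j, rfl⟩)
      · exact ⟨0, Or.inl rfl, rfl⟩
      · exact ⟨(Fin.castAdd k₃ (Fin.natAdd k₂ j)).succ, by simp, by simp [v]⟩
    rw [← span_insert] at hspan₁
    exact fun z hz => span_mono hsub (hspan₁ ▸ subset_span (Set.mem_insert_of_mem α hz))

end AdaptedBasis

section Coordinates

variable {n : ℕ}

lemma Module.Basis.exists_isUnit_det_mulVec_eq {K ι : Type*} [Field K] [Fintype ι]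
    [DecidableEq ι] (b : Basis ι K (ι → K)) :
    ∃ B : Matrix ι ι K, IsUnit B.det ∧ ∀ S, B *ᵥ S = b.equivFun.symm S :=
  ⟨LinearMap.toMatrix' b.equivFun.symm.toLinearMap,
    by rw [LinearMap.det_toMatrix']; exact LinearEquiv.isUnit_det' _,
    LinearMap.toMatrix'_mulVec _⟩

lemma Module.Basis.equivFun_symm_stdBasis (b : Basis (Fin n) (ZMod 2) (Fin n → ZMod 2))
    (j : Fin n) : b.equivFun.symm (stdBasis j) = b j := by
  simp [stdBasis_eq_single, Basis.equivFun_symm_apply, Pi.single_apply]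

lemma fSupp_restrictAt_subset_span_image (f : (Fin n → ZMod 2) → ℝ)
    {b : Basis (Fin n) (ZMod 2) (Fin n → ZMod 2)} {B : Matrix (Fin n) (Fin n) (ZMod 2)}
    (hB : IsUnit B.det) (hBb : ∀ S, B *ᵥ S = b.equivFun.symm S) {j : Fin n} {I : Set (Fin n)}
    (hI : restrictSupp f (b j) ⊆ span (ZMod 2) (b '' I)) :
    fSupp (restrictAt (changeBasis f B) j) ⊆
      span (ZMod 2) (Pi.basisFun (ZMod 2) (Fin n) '' (I \ {j})) := by
  intro S hS
  obtain ⟨hSj, hSI⟩ := mem_restrictSupp_of_mem_fSupp_restrictAt f hB hS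
  rw [hBb, hBb, b.equivFun_symm_stdBasis] at hSI
  have hsupp := b.mem_span_image.mp (hI hSI)
  rw [SetLike.mem_coe, Basis.mem_span_image]
  intro i hi
  rw [Finset.mem_coe, Finsupp.mem_support_iff, Pi.basisFun_repr] at hi
  refine ⟨hsupp ?_, fun h => hi (by rwa [h])⟩
  rwa [Finset.mem_coe, Finsupp.mem_support_iff, ← b.equivFun_apply, LinearEquiv.apply_symm_apply]

end Coordinates

theorem exists_good_basis_general {n r : ℕ} (hn : 1 ≤ n) (hr : 1 ≤ r)
    (f : (Fin n → ZMod 2) → ℝ)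
    (hdim : Module.finrank (ZMod 2) (Submodule.span (ZMod 2) (fSupp f)) = r) :
    ∃ (B : Matrix (Fin n) (Fin n) (ZMod 2)) (t : ℕ), IsUnit B.det ∧ 1 ≤ t ∧ t ≤ r ∧
      fCoeff (changeBasis f B) (stdBasis ⟨0, hn⟩) ≠ 0 ∧
      (∀ j : Fin n, 1 ≤ j.val → j.val < t →
        Module.finrank (ZMod 2)
          (Submodule.span (ZMod 2) (fSupp (restrictAt (changeBasis f B) j))) ≤ r - t) ∧
      fSupp (restrictAt (changeBasis f B) ⟨0, hn⟩) ⊆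
        ↑(Submodule.span (ZMod 2)
          {v | ∃ ℓ : Fin n, t ≤ ℓ.val ∧ ℓ.val < r ∧ v = stdBasis ℓ}) ∧
      (∀ ℓ : Fin n, t ≤ ℓ.val → ℓ.val < r →
        fCoeff (restrictAt (changeBasis f B) ⟨0, hn⟩) (stdBasis ℓ) ≠ 0) := by
  have hne : {γ | γ ∈ fSupp f ∧ γ ≠ 0}.Nonempty := by
    by_contra! h
    rw [span_eq_bot.mpr fun γ hγ => by_contra fun hγ0 => h.subset ⟨hγ, hγ0⟩, finrank_bot] at hdim
    omega
  obtain ⟨α, ⟨hαf, hα0⟩, hαmax⟩ := Set.exists_max_image _ (restrictRank f) (Set.toFinite _) hne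
  obtain ⟨t, b, ht1, htr, hrank, hb0, hbT, hbZ, hZ⟩ := exists_basis_adapted
    (finrank_fin_fun _) hα0 hαf (restrictSupp_subset_span f (subset_span hαf)) hdim
  obtain ⟨B, hB, hBb⟩ := b.exists_isUnit_det_mulVec_eq
  have hBe : ∀ j, B *ᵥ stdBasis j = b j := fun j => by rw [hBb, b.equivFun_symm_stdBasis]
  refine ⟨B, t, hB, ht1, htr, ?_, fun j hj1 hjt => ?_, ?_, fun ℓ htℓ hℓr => ?_⟩
  · rwa [fCoeff_changeBasis f hB, hBe, hb0 _ rfl]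
  · have hlt := finrank_span_fSupp_restrictAt_lt f hB j
    have hle := hαmax (b j) ⟨hbT j hj1 hjt, b.ne_zero j⟩
    have hm : restrictRank f α + t = r + 1 := hrank
    rw [hBe] at hlt
    omega
  · rw [← hb0 ⟨0, hn⟩ rfl] at hZ
    refine (fSupp_restrictAt_subset_span_image f hB hBb hZ).trans (span_mono ?_)
    rintro _ ⟨i, ⟨hi0 | ⟨hti, hir⟩, hi⟩, rfl⟩
    · exact absurd (Fin.ext hi0) hi
    · exact ⟨i, hti, hir, by rw [Pi.basisFun_apply, stdBasis_eq_single]⟩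
  · have hℓ0 : stdBasis ℓ ⟨0, hn⟩ = 0 := if_neg fun h => by
      have := congrArg Fin.val h; simp only at this; omega
    rw [fCoeff_restrictAt_changeBasis f hB, if_pos hℓ0, hBe, hBe, hb0 _ rfl]
    exact hbZ ℓ htℓ hℓr

/-- **Observation.** For every Boolean `f : 𝔽₂ⁿ → {−1,1}` with `Fdim(f) = r ≥ 1`,
there are an invertible `B ∈ 𝔽₂^{n×n}` and `t ∈ [r]` such that:
(1) `f̂_B(e₁) ≠ 0`;
(2) for every `j ∈ {2,…,t}`, `Fdim((f_B)^{(j)}) ≤ r − t`;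
(3) the Fourier support of `(f_B)^{(1)}` is contained in `span{e_{t+1},…,e_r}`;
(4) the Fourier coefficient of `(f_B)^{(1)}` at `e_ℓ` is nonzero for every
`ℓ ∈ {t+1,…,r}`.
(Indices of coordinates are 0-based in this formalization: coordinate `1 ≤ j ≤ n` of the
paper corresponds to the Lean index `j - 1 : Fin n`.) -/
theorem exists_good_basis {n r : ℕ} (hn : 1 ≤ n) (hr : 1 ≤ r)
    (f : (Fin n → ZMod 2) → ℝ) (hf : ∀ x, f x = 1 ∨ f x = -1)
    (hdim : Module.finrank (ZMod 2) (Submodule.span (ZMod 2) (fSupp f)) = r) :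
    ∃ (B : Matrix (Fin n) (Fin n) (ZMod 2)) (t : ℕ), IsUnit B.det ∧ 1 ≤ t ∧ t ≤ r ∧
      fCoeff (changeBasis f B) (stdBasis ⟨0, hn⟩) ≠ 0 ∧
      (∀ j : Fin n, 1 ≤ j.val → j.val < t →
        Module.finrank (ZMod 2)
          (Submodule.span (ZMod 2) (fSupp (restrictAt (changeBasis f B) j))) ≤ r - t) ∧
      fSupp (restrictAt (changeBasis f B) ⟨0, hn⟩) ⊆
        ↑(Submodule.span (ZMod 2)
          {v | ∃ ℓ : Fin n, t ≤ ℓ.val ∧ ℓ.val < r ∧ v = stdBasis ℓ}) ∧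
      (∀ ℓ : Fin n, t ≤ ℓ.val → ℓ.val < r →
        fCoeff (restrictAt (changeBasis f B) ⟨0, hn⟩) (stdBasis ℓ) ≠ 0) :=
  exists_good_basis_general hn hr f hdim
end

section
/- Let m ≥ 1 and let g : 𝔽₂^m → {−1,1} be a function that depends on all of its m variables (i.e., for every i ∈ [m] there exists x with g(x) ≠ g(x^i), where x^i flips the i-th bit of x). Suppose that for every i ∈ [m] there exists b_i ∈ {0,1} such that g is constant on the set {x : x_i = b_i}. Then g is, up to negations of input and output bits, the m-bit AND function: there exist v ∈ {−1,1} and a point c ∈ 𝔽₂^m (namely c_i = 1 − b_i for all i) such that g(c) = −v and g(x) = v for every x ≠ c. -/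
/-!
Off the point `c`, some coordinate `x i` differs from `1 - b i`, hence equals `b i`, so `g x = g b`.
Thus `g` is constant off `c`; since `g` is not constant (it depends on a variable), `g c ≠ g b`,
and as both values are `±1`, `g b = -g c`: the sign is `v = -g c`.
-/

theorem ZMod.two_eq_of_ne_one_sub {a d : ZMod 2} (h : a ≠ 1 - d) : a = d := by
  revert a d h
  decide

theorem apply_eq_of_ne_one_sub {ι β : Type*} {g : (ι → ZMod 2) → β} {b : ι → ZMod 2}
    (hb : ∀ i, ∀ x y : ι → ZMod 2, x i = b i → y i = b i → g x = g y)
    {x : ι → ZMod 2} (hx : x ≠ fun i => 1 - b i) : g x = g b := by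
  obtain ⟨i, hi⟩ := Function.ne_iff.mp hx
  exact hb i x b (ZMod.two_eq_of_ne_one_sub hi) rfl

theorem apply_ne_of_forall_ne_apply_eq {α β : Type*} {f : α → β} {c : α} {a : β}
    (hf : ∀ x ≠ c, f x = a) {y z : α} (hyz : f y ≠ f z) : f c ≠ a := by
  intro hc
  have hconst : ∀ x, f x = a := fun x => by
    by_cases hx : x = c
    · rw [hx, hc]
    · exact hf x hx
  exact hyz ((hconst y).trans (hconst z).symm)

theorem eq_neg_of_ne_of_sign {u w : ℝ} (hu : u = 1 ∨ u = -1) (hw : w = 1 ∨ w = -1)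
    (h : w ≠ u) : w = -u := by
  rcases hu with rfl | rfl <;> rcases hw with rfl | rfl <;> simp_all

theorem and_like_of_collapsing_general {m : ℕ}
    (g : (Fin m → ZMod 2) → ℝ) (hg : ∀ x, g x = 1 ∨ g x = -1)
    (hdep : ∀ i : Fin m, ∃ x : Fin m → ZMod 2,
      g x ≠ g (Function.update x i (x i + 1)))
    (b : Fin m → ZMod 2)
    (hb : ∀ i : Fin m, ∀ x y : Fin m → ZMod 2, x i = b i → y i = b i → g x = g y) :
    ∃ v : ℝ, (v = 1 ∨ v = -1) ∧
      g (fun i => 1 - b i) = -v ∧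
      ∀ x : Fin m → ZMod 2, x ≠ (fun i => 1 - b i) → g x = v := by
  set c : Fin m → ZMod 2 := fun i => 1 - b i
  have hoff : ∀ x ≠ c, g x = g b := fun x hx => apply_eq_of_ne_one_sub hb hx
  refine ⟨-g c, by rcases hg c with h | h <;> simp [h], (neg_neg _).symm, fun x hx => ?_⟩
  obtain ⟨i, -⟩ := Function.ne_iff.mp hx
  obtain ⟨y, hy⟩ := hdep i
  have hcb : g c ≠ g b := apply_ne_of_forall_ne_apply_eq hoff hy
  rw [hoff x hx]
  exact eq_neg_of_ne_of_sign (hg c) (hg b) hcb.symm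

/-- Let `g : 𝔽₂^m → {−1,1}` depend on all of its `m` variables, and suppose for every
`i ∈ [m]` there is a bit `b_i` such that `g` is constant on `{x : x_i = b_i}`. Then `g`
is, up to negations of input and output bits, the `m`-bit AND function: there is
`v ∈ {−1,1}` such that, with `c` given by `c_i = 1 − b_i`, we have `g(c) = −v` and
`g(x) = v` for every `x ≠ c`. -/
theorem and_like_of_collapsing {m : ℕ} (hm : 1 ≤ m)
    (g : (Fin m → ZMod 2) → ℝ) (hg : ∀ x, g x = 1 ∨ g x = -1)
    (hdep : ∀ i : Fin m, ∃ x : Fin m → ZMod 2,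
      g x ≠ g (Function.update x i (x i + 1)))
    (b : Fin m → ZMod 2)
    (hb : ∀ i : Fin m, ∀ x y : Fin m → ZMod 2, x i = b i → y i = b i → g x = g y) :
    ∃ v : ℝ, (v = 1 ∨ v = -1) ∧
      g (fun i => 1 - b i) = -v ∧
      ∀ x : Fin m → ZMod 2, x ≠ (fun i => 1 - b i) → g x = v :=
  and_like_of_collapsing_general g hg hdep b hb
end

section
/- Let N ≥ 1, let 𝒞 ⊆ {0,1}^N be a finite nonempty set of strings, and let μ be a probability distribution on 𝒞 with max_{c∈𝒞} μ(c) ≤ 5/6. Let A > 0 be such that for every matrix Γ ∈ ℝ^{𝒞×𝒞} with nonnegative entries and zeros on the diagonal, ‖Γ‖ ≤ A · max_{i∈[N]} ‖Γ ∘ D_i‖. Then there exists an index i ∈ [N] such that min(μ({c : c_i = 0}), μ({c : c_i = 1})) ≥ 1/(36A²). -/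
/-- The ℓ₂→ℓ₂ operator norm (largest singular value) of a real matrix. -/
noncomputable def l2OpNorm {α β : Type*} [Fintype α] [Fintype β] [DecidableEq β]
    (M : Matrix α β ℝ) : ℝ :=
  ‖LinearMap.toContinuousLinearMap (Matrix.toEuclideanLin M)‖

/-- The 0/1 matrix `D_i` whose `(c,c')` entry is 1 iff `c_i ≠ c'_i`. -/
def Dmat {N : ℕ} (𝒞 : Finset (Fin N → Bool)) (i : Fin N) :
    Matrix {c // c ∈ 𝒞} {c // c ∈ 𝒞} ℝ :=
  Matrix.of fun c c' => if (c : Fin N → Bool) i = (c' : Fin N → Bool) i then 0 else 1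

/-!
Test the hypothesis on `Γ = √μ √μᵀ` with its diagonal removed. Against the unit vector `√μ` its
quadratic form is `1 - ∑ μ(c)² ≥ 1 - max μ ≥ 1/6`. The Hadamard product `Γ ∘ D_i` keeps only the
entries between the halves `{c_i = 0}` and `{c_i = 1}`, of masses `p` and `q`; Cauchy–Schwarz on
each half gives `‖Γ ∘ D_i‖ ≤ √(pq) ≤ √(min p q)`. So `1/6 ≤ A √(max_i min p_i q_i)`.
-/

open Finset

lemma mul_le_min_of_add_eq_one {p q : ℝ} (hp : 0 ≤ p) (hq : 0 ≤ q) (h : p + q = 1) :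
    p * q ≤ min p q :=
  le_min (mul_le_of_le_one_right hp (by linarith)) (mul_le_of_le_one_left hq (by linarith))

def cutOuter {α : Type*} (f : α → Bool) (u : α → ℝ) : Matrix α α ℝ :=
  Matrix.of fun c c' => if f c = f c' then 0 else u c * u c'

section

variable {α : Type*} [DecidableEq α]

def offDiagOuter (u : α → ℝ) : Matrix α α ℝ :=
  Matrix.of fun c c' => if c = c' then 0 else u c * u c'

lemma offDiagOuter_nonneg {u : α → ℝ} (hu : ∀ c, 0 ≤ u c) (c c' : α) :
    0 ≤ offDiagOuter u c c' := by
  simp only [offDiagOuter, Matrix.of_apply]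
  split_ifs
  exacts [le_rfl, mul_nonneg (hu c) (hu c')]

lemma offDiagOuter_apply_self (u : α → ℝ) (c : α) : offDiagOuter u c c = 0 := by
  simp [offDiagOuter]

end

section

variable {α : Type*} [Fintype α]

lemma sum_eq_sum_filter_false_add_sum_filter_true (f : α → Bool) (g : α → ℝ) :
    ∑ c, g c = ∑ c with f c = false, g c + ∑ c with f c = true, g c := by
  rw [← sum_filter_add_sum_filter_not univ (fun c => f c = false)]
  simp

variable [DecidableEq α]

lemma toEuclideanLin_apply_eq_sum (M : Matrix α α ℝ) (x : EuclideanSpace ℝ α) (c : α) :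
    Matrix.toEuclideanLin M x c = ∑ c', M c c' * x c' :=
  rfl

lemma l2OpNorm_le_sqrt {M : Matrix α α ℝ} {B : ℝ} (hB : 0 ≤ B)
    (h : ∀ x : EuclideanSpace ℝ α, ‖Matrix.toEuclideanLin M x‖ ^ 2 ≤ B * ‖x‖ ^ 2) :
    l2OpNorm M ≤ √B := by
  refine ContinuousLinearMap.opNorm_le_bound _ (Real.sqrt_nonneg B) fun x => ?_
  rw [LinearMap.coe_toContinuousLinearMap', ← sq_le_sq₀ (norm_nonneg _) (by positivity),
    mul_pow, Real.sq_sqrt hB]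
  exact h x

lemma inner_le_l2OpNorm (M : Matrix α α ℝ) {x : EuclideanSpace ℝ α} (hx : ‖x‖ = 1) :
    inner ℝ x (Matrix.toEuclideanLin M x) ≤ l2OpNorm M :=
  calc inner ℝ x (Matrix.toEuclideanLin M x)
      ≤ ‖x‖ * ‖Matrix.toEuclideanLin M x‖ := real_inner_le_norm _ _
    _ ≤ ‖x‖ * (l2OpNorm M * ‖x‖) := by
      gcongr
      exact (LinearMap.toContinuousLinearMap (Matrix.toEuclideanLin M)).le_opNorm x
    _ = l2OpNorm M := by rw [hx, one_mul, mul_one]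

lemma inner_offDiagOuter (u : α → ℝ) :
    inner ℝ (WithLp.toLp 2 u) (Matrix.toEuclideanLin (offDiagOuter u) (WithLp.toLp 2 u)) =
      (∑ c, u c ^ 2) ^ 2 - ∑ c, u c ^ 4 := by
  have hrow (c : α) : (∑ c', offDiagOuter u c c' * u c') * u c =
      u c ^ 2 * ∑ c', u c' ^ 2 - u c ^ 4 := by
    have hentry (c' : α) : offDiagOuter u c c' * u c' =
        u c * u c' ^ 2 - if c = c' then u c ^ 3 else 0 := by
      unfold offDiagOuter
      split_ifs with h <;> simp [h] <;> ring
    simp only [hentry, sum_sub_distrib, sum_ite_eq, mem_univ, if_true,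
      ← mul_sum]
    ring
  simp only [PiLp.inner_apply, RCLike.inner_apply, conj_trivial, toEuclideanLin_apply_eq_sum,
    hrow, sum_sub_distrib, ← sum_mul, sq (∑ c, u c ^ 2)]

lemma one_sub_le_l2OpNorm_offDiagOuter_sqrt {μ : α → ℝ} (hμ0 : ∀ c, 0 ≤ μ c)
    (hμ1 : ∑ c, μ c = 1) {m : ℝ} (hμm : ∀ c, μ c ≤ m) :
    1 - m ≤ l2OpNorm (offDiagOuter fun c => √(μ c)) := by
  have hsq (c : α) : √(μ c) ^ 2 = μ c := Real.sq_sqrt (hμ0 c)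
  have hunit : ‖WithLp.toLp 2 (fun c => √(μ c))‖ = 1 := by
    simp [EuclideanSpace.norm_eq, hsq, hμ1]
  have hcollision : ∑ c, √(μ c) ^ 4 ≤ m :=
    calc ∑ c, √(μ c) ^ 4 = ∑ c, μ c * μ c :=
          sum_congr rfl fun c _ => by rw [show 4 = 2 * 2 from rfl, pow_mul, hsq, sq]
      _ ≤ ∑ c, m * μ c := by gcongr with c; exacts [hμ0 c, hμm c]
      _ = m := by rw [← mul_sum, hμ1, mul_one]
  have := inner_le_l2OpNorm (offDiagOuter fun c => √(μ c)) hunit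
  rw [inner_offDiagOuter] at this
  simp only [hsq, hμ1] at this
  linarith

lemma l2OpNorm_cutOuter_le (f : α → Bool) (u : α → ℝ) :
    l2OpNorm (cutOuter f u) ≤
      √((∑ c with f c = false, u c ^ 2) * ∑ c with f c = true, u c ^ 2) := by
  set S : Bool → ℝ := fun b => ∑ c with f c = b, u c ^ 2
  refine l2OpNorm_le_sqrt (by positivity) fun y => ?_
  set t : Bool → ℝ := fun b => ∑ c with f c = b, u c * y c
  set Y : Bool → ℝ := fun b => ∑ c with f c = b, y c ^ 2
  have hMy (c : α) : Matrix.toEuclideanLin (cutOuter f u) y c = u c * t (!f c) := by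
    simp only [toEuclideanLin_apply_eq_sum, cutOuter, Matrix.of_apply, t, sum_filter,
      mul_sum]
    refine sum_congr rfl fun c' _ => ?_
    cases f c <;> cases f c' <;> simp [mul_assoc]
  have hCS (b : Bool) : t b ^ 2 ≤ S b * Y b := sum_mul_sq_le_sq_mul_sq _ _ _
  have hrestrict (b : Bool) :
      ∑ c with f c = b, u c ^ 2 * t (!f c) ^ 2 = S b * t (!b) ^ 2 := by
    rw [sum_mul]
    exact sum_congr rfl fun c hc => by rw [(mem_filter.mp hc).2]
  calc ‖Matrix.toEuclideanLin (cutOuter f u) y‖ ^ 2 = ∑ c, u c ^ 2 * t (!f c) ^ 2 := by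
        simp only [EuclideanSpace.real_norm_sq_eq, hMy, mul_pow]
    _ = S false * t true ^ 2 + S true * t false ^ 2 := by
        rw [sum_eq_sum_filter_false_add_sum_filter_true f, hrestrict, hrestrict]; rfl
    _ ≤ S false * (S true * Y true) + S true * (S false * Y false) := by
        have := hCS true; have := hCS false
        gcongr
    _ = S false * S true * ‖y‖ ^ 2 := by
        rw [EuclideanSpace.real_norm_sq_eq, sum_eq_sum_filter_false_add_sum_filter_true f]
        ring

lemma l2OpNorm_cutOuter_sqrt_le {μ : α → ℝ} (hμ0 : ∀ c, 0 ≤ μ c) (hμ1 : ∑ c, μ c = 1)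
    (f : α → Bool) :
    l2OpNorm (cutOuter f fun c => √(μ c)) ≤
      √(min (∑ c with f c = false, μ c) (∑ c with f c = true, μ c)) := by
  have hsplit := (sum_eq_sum_filter_false_add_sum_filter_true f μ).symm.trans hμ1
  have hfalse : 0 ≤ ∑ c with f c = false, μ c := sum_nonneg fun c _ => hμ0 c
  have htrue : 0 ≤ ∑ c with f c = true, μ c := sum_nonneg fun c _ => hμ0 c
  refine (l2OpNorm_cutOuter_le f _).trans (Real.sqrt_le_sqrt ?_)
  simp only [Real.sq_sqrt (hμ0 _)]
  exact mul_le_min_of_add_eq_one hfalse htrue hsplit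

end

lemma hadamard_offDiagOuter_Dmat {N : ℕ} (𝒞 : Finset (Fin N → Bool)) (u : {c // c ∈ 𝒞} → ℝ)
    (i : Fin N) :
    (Matrix.of fun c c' => offDiagOuter u c c' * Dmat 𝒞 i c c') =
      cutOuter (fun c : {c // c ∈ 𝒞} => (c : Fin N → Bool) i) u := by
  ext c c'
  by_cases h : (c : Fin N → Bool) i = (c' : Fin N → Bool) i
  · simp [cutOuter, Dmat, h]
  · have hne : c ≠ c' := fun e => h (e ▸ rfl)
    simp [offDiagOuter, cutOuter, Dmat, h, hne]

theorem exists_balanced_query_general {N : ℕ} (hN : 1 ≤ N)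
    (𝒞 : Finset (Fin N → Bool))
    (μ : {c // c ∈ 𝒞} → ℝ) (hμ0 : ∀ c, 0 ≤ μ c) (hμ1 : ∑ c, μ c = 1)
    (hμmax : ∀ c, μ c ≤ 5 / 6)
    (A : ℝ) (hA : 0 < A)
    (hadv : ∀ Γ : Matrix {c // c ∈ 𝒞} {c // c ∈ 𝒞} ℝ,
      (∀ c c', 0 ≤ Γ c c') → (∀ c, Γ c c = 0) →
      l2OpNorm Γ ≤ A * ⨆ i : Fin N,
        l2OpNorm (Matrix.of fun c c' => Γ c c' * Dmat 𝒞 i c c')) :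
    ∃ i : Fin N,
      1 / (36 * A ^ 2) ≤
        min (∑ c : {c // c ∈ 𝒞}, if (c : Fin N → Bool) i = false then μ c else 0)
            (∑ c : {c // c ∈ 𝒞}, if (c : Fin N → Bool) i = true then μ c else 0) := by
  have : Nonempty (Fin N) := ⟨⟨0, hN⟩⟩
  set u := fun c => √(μ c)
  set balance : Fin N → ℝ := fun i =>
    min (∑ c : {c // c ∈ 𝒞}, if (c : Fin N → Bool) i = false then μ c else 0)
      (∑ c : {c // c ∈ 𝒞}, if (c : Fin N → Bool) i = true then μ c else 0)
  have hlower : 1 / 6 ≤ l2OpNorm (offDiagOuter u) := by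
    linarith [one_sub_le_l2OpNorm_offDiagOuter_sqrt hμ0 hμ1 hμmax]
  have hupper (i : Fin N) :
      l2OpNorm (Matrix.of fun c c' => offDiagOuter u c c' * Dmat 𝒞 i c c') ≤ √(balance i) := by
    rw [hadamard_offDiagOuter_Dmat]
    simpa only [sum_filter] using l2OpNorm_cutOuter_sqrt_le hμ0 hμ1 _
  obtain ⟨i₀, hi₀⟩ := Finite.exists_max balance
  have hsup := ciSup_le fun i => (hupper i).trans (Real.sqrt_le_sqrt (hi₀ i))
  have key : 1 / 6 ≤ A * √(balance i₀) := hlower.trans <|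
    (hadv _ (offDiagOuter_nonneg fun c => Real.sqrt_nonneg _) (offDiagOuter_apply_self u)).trans
      (mul_le_mul_of_nonneg_left hsup hA.le)
  refine ⟨i₀, ?_⟩
  have hsqrt : 1 / (6 * A) ≤ √(balance i₀) := by
    rw [div_le_iff₀ (by positivity)]
    linarith
  calc 1 / (36 * A ^ 2) = (1 / (6 * A)) ^ 2 := by ring
    _ ≤ balance i₀ := (Real.le_sqrt' (by positivity)).1 hsqrt

/-- **Balanced-query lemma.** Let `𝒞 ⊆ {0,1}^N` be finite and nonempty, `μ` a probability
distribution on `𝒞` with `max_c μ(c) ≤ 5/6`, and `A > 0` such that every nonnegative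
matrix `Γ` with zero diagonal satisfies `‖Γ‖ ≤ A · max_i ‖Γ ∘ D_i‖`. Then some index
`i ∈ [N]` satisfies `min(μ(C_i = 0), μ(C_i = 1)) ≥ 1/(36A²)`. -/
theorem exists_balanced_query {N : ℕ} (hN : 1 ≤ N)
    (𝒞 : Finset (Fin N → Bool)) (h𝒞 : 𝒞.Nonempty)
    (μ : {c // c ∈ 𝒞} → ℝ) (hμ0 : ∀ c, 0 ≤ μ c) (hμ1 : ∑ c, μ c = 1)
    (hμmax : ∀ c, μ c ≤ 5 / 6)
    (A : ℝ) (hA : 0 < A)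
    (hadv : ∀ Γ : Matrix {c // c ∈ 𝒞} {c // c ∈ 𝒞} ℝ,
      (∀ c c', 0 ≤ Γ c c') → (∀ c, Γ c c = 0) →
      l2OpNorm Γ ≤ A * ⨆ i : Fin N,
        l2OpNorm (Matrix.of fun c c' => Γ c c' * Dmat 𝒞 i c c')) :
    ∃ i : Fin N,
      1 / (36 * A ^ 2) ≤
        min (∑ c : {c // c ∈ 𝒞}, if (c : Fin N → Bool) i = false then μ c else 0)
            (∑ c : {c // c ∈ 𝒞}, if (c : Fin N → Bool) i = true then μ c else 0) :=
  exists_balanced_query_general hN 𝒞 μ hμ0 hμ1 hμmax A hA hadv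
end
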